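/- arXiv:2304.08791 — 2 statements merged into one kernel-verified Lean document; each statement's English description precedes it below -/
import Mathlib

section
/- In the localization U_S of U(sl_{n+1}), the elements ω_k = e_{k0} e_{0k} + Σ_{j=1}^n (e_{kj} − (δ_{jk}/(n+1)) I_{n+1})(h_j − 1) e_{0k} e_{0j}^{-1} (for 1 ≤ k ≤ n, with e_{kk} interpreted appropriately so that e_{kk} − (1/(n+1))I_{n+1} = h_k) commute with h_i and with e_{0i} for all 1 ≤ i ≤ n. -/
open Matrix

/-!
Both commutations are computations with the inner derivations `ad h_i` and `ad e_{0i}`.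
Every summand of `ω_k` is a product of eigenvectors of `ad h_i` (the eigenvalue of `e_{0j}⁻¹`
being the opposite of that of `e_{0j}`) whose eigenvalues add up to zero. By the Leibniz rule,
`[e_{0i}, e_{k0} e_{0k}] = -(δ_{ik} Σ_j h_j + e_{ki}) e_{0k}`, and the sum contributes exactly the
opposite, since `e_{0i}` commutes with `e_{0k} e_{0j}⁻¹` and `e_{0j} (h_j - 1) = h_j e_{0j}`.
-/

section

attribute [local instance] LieRing.ofAssociativeRing

section RingCommutator

variable {A : Type*} [Ring A]

theorem Ring.mul_lie (x y z : A) : ⁅x * y, z⁆ = x * ⁅y, z⁆ + ⁅x, z⁆ * y := by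
  simp only [Ring.lie_def]; noncomm_ring

theorem Ring.lie_mul (x y z : A) : ⁅x, y * z⁆ = ⁅x, y⁆ * z + y * ⁅x, z⁆ := by
  simp only [Ring.lie_def]; noncomm_ring

theorem Ring.mul_lie_eq_smul {h x y : A} {m m' : ℤ} (hx : ⁅x, h⁆ = m • x)
    (hy : ⁅y, h⁆ = m' • y) : ⁅x * y, h⁆ = (m + m') • (x * y) := by
  rw [Ring.mul_lie, hx, hy, mul_smul_comm, smul_mul_assoc, add_smul, add_comm]

theorem Units.inv_lie_eq_smul {h : A} {m : ℤ} (v : Aˣ) (hv : ⁅(v : A), h⁆ = m • (v : A)) :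
    ⁅(↑v⁻¹ : A), h⁆ = (-m) • (↑v⁻¹ : A) := by
  have : ⁅(↑v⁻¹ : A), h⁆ = -(↑v⁻¹ * ⁅(v : A), h⁆ * ↑v⁻¹) := by
    simp only [Ring.lie_def, mul_sub, sub_mul, mul_assoc, Units.mul_inv, mul_one,
      Units.inv_mul_cancel_left]
    abel
  rw [this, hv, mul_smul_comm, smul_mul_assoc, Units.inv_mul, one_mul]
  exact (_root_.neg_smul m _).symm

theorem sub_smul_one_lie {R : Type*} [CommRing R] [Algebra R A] (x y : A) (c : R) :
    ⁅x - c • 1, y⁆ = ⁅x, y⁆ := by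
  simp only [Ring.lie_def, sub_mul, mul_sub, smul_mul_assoc, mul_smul_comm, one_mul, mul_one]
  abel

theorem lie_sub_smul_one {R : Type*} [CommRing R] [Algebra R A] (x y : A) (c : R) :
    ⁅x, y - c • 1⁆ = ⁅x, y⁆ := by
  simp only [Ring.lie_def, sub_mul, mul_sub, smul_mul_assoc, mul_smul_comm, one_mul, mul_one]
  abel

end RingCommutator

section OmegaElement

variable {ι A : Type*} [Fintype ι] [DecidableEq ι] [Ring A]

/-- `ω_k` written with `f j = e_{0j}`, `H j = h_j`, `X j = e_{kj} - δ_{jk}/(n+1) I` and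
`g = e_{k0}`. -/
def omegaElement (f : ι → Aˣ) (H X : ι → A) (g : A) (k : ι) : A :=
  g * f k + ∑ j, X j * (H j - 1) * (f k * ↑(f j)⁻¹)

theorem commute_omegaElement_of_weights (f : ι → Aˣ) (H X : ι → A) (g : A) (k i : ι)
    (hfH : ∀ a, ⁅(f a : A), H i⁆ = (if a = i then 1 else 0 : ℤ) • (f a : A))
    (hHH : ∀ j, ⁅H j, H i⁆ = 0)
    (hXH : ∀ j, ⁅X j, H i⁆ =
      ((if j = i then 1 else 0) - (if k = i then 1 else 0) : ℤ) • X j)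
    (hgH : ⁅g, H i⁆ = (-(if k = i then 1 else 0) : ℤ) • g) :
    Commute (omegaElement f H X g k) (H i) := by
  have hH1 : ∀ j, ⁅H j - 1, H i⁆ = (0 : ℤ) • (H j - 1) := fun j => by
    rw [sub_lie, hHH, (Commute.one_left _).lie_eq, sub_zero, zero_smul]
  have hgf : ⁅g * f k, H i⁆ = 0 := by
    rw [Ring.mul_lie_eq_smul hgH (hfH k), neg_add_cancel, zero_smul]
  have hterm : ∀ j, ⁅X j * (H j - 1) * (f k * ↑(f j)⁻¹), H i⁆ = 0 := fun j => by
    rw [Ring.mul_lie_eq_smul (Ring.mul_lie_eq_smul (hXH j) (hH1 j))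
      (Ring.mul_lie_eq_smul (hfH k) (Units.inv_lie_eq_smul _ (hfH j)))]
    convert zero_smul ℤ _
    split_ifs <;> omega
  rw [commute_iff_lie_eq, omegaElement, add_lie, sum_lie, hgf,
    Finset.sum_eq_zero fun j _ => hterm j, add_zero]

theorem commute_omegaElement_unit (f : ι → Aˣ) (H X : ι → A) (g : A) (k i : ι)
    (hff : ∀ a b, Commute (f a : A) (f b))
    (hfH : ∀ a b, ⁅(f a : A), H b⁆ = (if a = b then 1 else 0 : ℤ) • (f a : A))
    (hfX : ∀ j, ⁅(f i : A), X j⁆ = if i = k then (f j : A) else 0)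
    (hfg : ⁅(f i : A), g⁆ = -((if i = k then ∑ j, H j else 0) + X i)) :
    Commute (omegaElement f H X g k) (f i) := by
  have hquot : ∀ j, ⁅(f i : A), (f k : A) * ↑(f j)⁻¹⁆ = 0 := fun j =>
    ((hff i k).mul_right (hff i j).units_inv_right).lie_eq
  have hH1 : ∀ j, ⁅(f i : A), H j - 1⁆ = if i = j then (f i : A) else 0 := fun j => by
    rw [lie_sub, hfH, (Commute.one_right _).lie_eq, sub_zero, ite_smul, one_smul, zero_smul]
  have hcancel : ∀ j, (f j : A) * (f k * ↑(f j)⁻¹) = f k := fun j => by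
    rw [← mul_assoc, (hff j k).eq, mul_assoc, Units.mul_inv, mul_one]
  have hshift : ∀ j, (f j : A) * (H j - 1) * (f k * ↑(f j)⁻¹) = H j * f k := fun j => by
    have : (f j : A) * H j = H j * f j + f j := by
      rw [← sub_eq_iff_eq_add', ← Ring.lie_def, hfH, if_pos rfl, one_smul]
    rw [mul_sub, this, mul_one, add_sub_cancel_right, mul_assoc, hcancel]
  have hterm : ∀ j, ⁅(f i : A), X j * (H j - 1) * (f k * ↑(f j)⁻¹)⁆
      = (if i = j then X i * f k else 0) + (if i = k then H j * f k else 0) := fun j => by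
    rw [Ring.lie_mul, Ring.lie_mul, hquot, mul_zero, add_zero, hfX, hH1]
    simp only [add_mul, ite_mul, mul_ite, zero_mul, mul_zero]
    rw [add_comm]
    congr 1
    · split_ifs with hij
      · rw [hij, mul_assoc, hcancel]
      · rfl
    · split_ifs
      · exact hshift j
      · rfl
  rw [Commute.symm_iff, commute_iff_lie_eq, omegaElement, lie_add, Ring.lie_mul, hfg,
    (hff i k).lie_eq, mul_zero, add_zero, lie_sum]
  simp only [hterm, Finset.sum_add_distrib, Finset.sum_ite_eq, Finset.mem_univ, if_true]
  split_ifs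
  · rw [← Finset.sum_mul]
    noncomm_ring
  · simp

end OmegaElement

namespace Matrix

variable {m R : Type*} [Fintype m] [DecidableEq m] [CommRing R]

theorem lie_single_single (a b c d : m) :
    ⁅single a b (1 : R), single c d (1 : R)⁆
      = (if b = c then single a d 1 else 0) - (if d = a then single c b 1 else 0) := by
  rw [Ring.lie_def]
  split_ifs with hbc hda hda <;> subst_vars <;> simp [single_mul_single_of_ne, *]

theorem lie_single_single_diag (a b c : m) :
    ⁅single a b (1 : R), single c c (1 : R)⁆
      = ((if b = c then 1 else 0) - (if a = c then 1 else 0) : ℤ) • single a b 1 := by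
  rw [lie_single_single]
  split_ifs <;> subst_vars <;> simp_all

end Matrix

noncomputable section SpecialLinear

variable {n : ℕ}

/-- `h_j`; an index `j : Fin n` stands for the index `j.succ` of `Fin (n + 1)`. -/
def tracelessDiag (n : ℕ) (j : Fin n) : Matrix (Fin (n + 1)) (Fin (n + 1)) ℂ :=
  single j.succ j.succ 1 - ((n : ℂ) + 1)⁻¹ • 1

def tracelessSingle (n : ℕ) (k j : Fin n) : Matrix (Fin (n + 1)) (Fin (n + 1)) ℂ :=
  single k.succ j.succ 1 - (if j = k then ((n : ℂ) + 1)⁻¹ else 0) • 1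

theorem trace_tracelessDiag (j : Fin n) : (tracelessDiag n j).trace = 0 := by
  rw [tracelessDiag, trace_sub, trace_smul, trace_one, trace_single_eq_same, Fintype.card_fin,
    smul_eq_mul, Nat.cast_add_one, inv_mul_cancel₀ (Nat.cast_add_one_ne_zero n), sub_self]

theorem tracelessSingle_self (k : Fin n) : tracelessSingle n k k = tracelessDiag n k := by
  rw [tracelessSingle, if_pos rfl, tracelessDiag]

theorem trace_tracelessSingle (k j : Fin n) : (tracelessSingle n k j).trace = 0 := by
  by_cases h : j = k
  · rw [h, tracelessSingle_self, trace_tracelessDiag]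
  · rw [tracelessSingle, if_neg h, zero_smul, sub_zero,
      trace_single_eq_of_ne _ _ _ ((Fin.succ_injective n).ne (Ne.symm h))]

theorem trace_single_zero_succ (a : Fin n) :
    (single (0 : Fin (n + 1)) a.succ (1 : ℂ)).trace = 0 :=
  trace_single_eq_of_ne _ _ _ (Fin.succ_ne_zero a).symm

theorem trace_single_succ_zero (a : Fin n) : (single a.succ 0 (1 : ℂ)).trace = 0 :=
  trace_single_eq_of_ne _ _ _ (Fin.succ_ne_zero a)

theorem lie_single_zero_succ_single_zero_succ (a b : Fin n) :
    ⁅single (0 : Fin (n + 1)) a.succ (1 : ℂ), single (0 : Fin (n + 1)) b.succ (1 : ℂ)⁆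
      = 0 := by
  simp [lie_single_single, Fin.succ_ne_zero]

theorem lie_single_zero_succ_tracelessDiag (a b : Fin n) :
    ⁅single (0 : Fin (n + 1)) a.succ (1 : ℂ), tracelessDiag n b⁆
      = (if a = b then 1 else 0 : ℤ) • single (0 : Fin (n + 1)) a.succ 1 := by
  rw [tracelessDiag, lie_sub_smul_one, lie_single_single_diag]
  simp [(Fin.succ_ne_zero b).symm]

theorem lie_tracelessDiag_tracelessDiag (a b : Fin n) :
    ⁅tracelessDiag n a, tracelessDiag n b⁆ = 0 := by
  rw [tracelessDiag, tracelessDiag, sub_smul_one_lie, lie_sub_smul_one, lie_single_single_diag]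
  simp

theorem lie_single_zero_succ_tracelessSingle (k i j : Fin n) :
    ⁅single (0 : Fin (n + 1)) i.succ (1 : ℂ), tracelessSingle n k j⁆
      = if i = k then single 0 j.succ 1 else 0 := by
  rw [tracelessSingle, lie_sub_smul_one, lie_single_single]
  simp [Fin.succ_ne_zero, eq_comm]

theorem lie_tracelessSingle_tracelessDiag (k j i : Fin n) :
    ⁅tracelessSingle n k j, tracelessDiag n i⁆
      = ((if j = i then 1 else 0) - (if k = i then 1 else 0) : ℤ) • tracelessSingle n k j := by
  rw [tracelessSingle, tracelessDiag, sub_smul_one_lie, lie_sub_smul_one,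
    lie_single_single_diag]
  by_cases h : j = k
  · simp [h]
  · simp [h]

theorem lie_single_succ_zero_tracelessDiag (k i : Fin n) :
    ⁅single k.succ (0 : Fin (n + 1)) (1 : ℂ), tracelessDiag n i⁆
      = (-(if k = i then 1 else 0) : ℤ) • single k.succ 0 1 := by
  rw [tracelessDiag, lie_sub_smul_one, lie_single_single_diag]
  simp [(Fin.succ_ne_zero i).symm]

theorem sum_tracelessDiag :
    ∑ j, tracelessDiag n j = 1 - single 0 0 1 - ((n : ℂ) * ((n : ℂ) + 1)⁻¹) • 1 := by
  have h := sum_single_one (m := Fin (n + 1)) (α := ℂ)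
  rw [Fin.sum_univ_succ] at h
  simp only [tracelessDiag, Finset.sum_sub_distrib, Finset.sum_const, Finset.card_univ,
    Fintype.card_fin, ← Nat.cast_smul_eq_nsmul ℂ, smul_smul, eq_sub_of_add_eq' h]

theorem lie_single_zero_succ_single_succ_zero (k i : Fin n) :
    ⁅single (0 : Fin (n + 1)) i.succ (1 : ℂ), single k.succ (0 : Fin (n + 1)) (1 : ℂ)⁆
      = -((if i = k then ∑ j, tracelessDiag n j else 0) + tracelessSingle n k i) := by
  by_cases h : i = k
  · subst h
    rw [if_pos rfl, tracelessSingle_self, sum_tracelessDiag, tracelessDiag, lie_single_single,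
      if_pos rfl, if_pos rfl]
    match_scalars
    · ring
    · ring
    · field_simp
      ring
  · rw [if_neg h, lie_single_single, tracelessSingle, if_neg h]
    simp [h]

end SpecialLinear

end

/-- In any associative `ℂ`-algebra receiving the Lie algebra `sl_{n+1}` (such as
the localization `U_S` of `U(sl_{n+1})`) in which the images of the `e_{0j}` are invertible,
the elements
`ω_k = e_{k0} e_{0k} + Σ_{j=1}^n (e_{kj} - (δ_{jk}/(n+1)) I_{n+1})(h_j - 1) e_{0k} e_{0j}⁻¹`
(for `1 ≤ k ≤ n`, where `e_{kk} - (1/(n+1)) I_{n+1} = h_k`) commute with `h_i` and with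
`e_{0i}` for all `1 ≤ i ≤ n`. -/
theorem statement7 (n : ℕ) (A : Type*) [Ring A] [Algebra ℂ A]
    (φ : Matrix (Fin (n + 1)) (Fin (n + 1)) ℂ →ₗ[ℂ] A)
    (hφ : ∀ x y : Matrix (Fin (n + 1)) (Fin (n + 1)) ℂ, x.trace = 0 → y.trace = 0 →
      φ ⁅x, y⁆ = φ x * φ y - φ y * φ x)
    (u : Fin n → Aˣ) (hu : ∀ j : Fin n, (u j : A) = φ (single 0 j.succ 1))
    (k : Fin n) (i : Fin n) :
    Commute
      (φ (single k.succ 0 1) * φ (single 0 k.succ 1)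
        + ∑ j : Fin n,
            (φ (single k.succ j.succ 1 - (if j = k then ((n : ℂ) + 1)⁻¹ else 0) • 1)) *
              (φ (single j.succ j.succ 1 - ((n : ℂ) + 1)⁻¹ • 1) - 1) *
              ((u k : A) * (((u j)⁻¹ : Aˣ) : A)))
      (φ (single i.succ i.succ 1 - ((n : ℂ) + 1)⁻¹ • 1)) ∧
    Commute
      (φ (single k.succ 0 1) * φ (single 0 k.succ 1)
        + ∑ j : Fin n,
            (φ (single k.succ j.succ 1 - (if j = k then ((n : ℂ) + 1)⁻¹ else 0) • 1)) *
              (φ (single j.succ j.succ 1 - ((n : ℂ) + 1)⁻¹ • 1) - 1) *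
              ((u k : A) * (((u j)⁻¹ : Aˣ) : A)))
      (φ (single 0 i.succ 1)) := by
  have hlie : ∀ x y : Matrix (Fin (n + 1)) (Fin (n + 1)) ℂ, x.trace = 0 → y.trace = 0 →
      ⁅φ x, φ y⁆ = φ ⁅x, y⁆ := fun x y hx hy => (hφ x y hx hy).symm
  have hff : ∀ a b, Commute (u a : A) (u b) := fun a b => by
    rw [commute_iff_lie_eq, hu a, hu b, hlie _ _ (trace_single_zero_succ a)
      (trace_single_zero_succ b), lie_single_zero_succ_single_zero_succ, map_zero]
  have hfH : ∀ a b, ⁅(u a : A), φ (tracelessDiag n b)⁆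
      = (if a = b then 1 else 0 : ℤ) • (u a : A) := fun a b => by
    rw [hu, hlie _ _ (trace_single_zero_succ a) (trace_tracelessDiag b),
      lie_single_zero_succ_tracelessDiag, map_zsmul]
  have hHH : ∀ j, ⁅φ (tracelessDiag n j), φ (tracelessDiag n i)⁆ = 0 := fun j => by
    rw [hlie _ _ (trace_tracelessDiag j) (trace_tracelessDiag i),
      lie_tracelessDiag_tracelessDiag, map_zero]
  have hXH : ∀ j, ⁅φ (tracelessSingle n k j), φ (tracelessDiag n i)⁆
      = ((if j = i then 1 else 0) - (if k = i then 1 else 0) : ℤ) •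
        φ (tracelessSingle n k j) := fun j => by
    rw [hlie _ _ (trace_tracelessSingle k j) (trace_tracelessDiag i),
      lie_tracelessSingle_tracelessDiag, map_zsmul]
  have hgH : ⁅φ (single k.succ 0 1), φ (tracelessDiag n i)⁆
      = (-(if k = i then 1 else 0) : ℤ) • φ (single k.succ 0 1) := by
    rw [hlie _ _ (trace_single_succ_zero k) (trace_tracelessDiag i),
      lie_single_succ_zero_tracelessDiag, map_zsmul]
  have hfX : ∀ j, ⁅(u i : A), φ (tracelessSingle n k j)⁆
      = if i = k then (u j : A) else 0 := fun j => by
    rw [hu i, hu j, hlie _ _ (trace_single_zero_succ i) (trace_tracelessSingle k j),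
      lie_single_zero_succ_tracelessSingle, apply_ite φ, map_zero]
  have hfg : ⁅(u i : A), φ (single k.succ 0 1)⁆
      = -((if i = k then ∑ j, φ (tracelessDiag n j) else 0) + φ (tracelessSingle n k i)) := by
    rw [hu i, hlie _ _ (trace_single_zero_succ i) (trace_single_succ_zero k),
      lie_single_zero_succ_single_succ_zero, map_neg, map_add, apply_ite φ, map_sum, map_zero]
  simp only [← hu]
  exact ⟨commute_omegaElement_of_weights u _ _ _ k i (fun a => hfH a i) hHH hXH hgH,
    commute_omegaElement_unit u _ _ _ k i hff hfH hfX hfg⟩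
end

section
/- Let V be a gl_n-module, Ω the D_n-module ℂ[d_1,…,d_n] with ∂/∂x_i·f(d) = −f(d+e_i), x_i·f(d) = −f(d−e_i)d_i, and make T(Ω,V) = Ω ⊗ V an sl_{n+1}-module via the homomorphism ψ (with h_k ↦ x_k∂_k⊗1 + 1⊗E_{kk}, e_{ij} ↦ x_i∂_j⊗1 + 1⊗E_{ij}, e_{0j} ↦ −∂_j⊗1, e_{i0} ↦ Σ_q x_q⊗E_{iq} + x_iΣ_q x_q∂_q⊗1 + x_i⊗I_n). Then the Whittaker subspace {w ∈ T(Ω,V) : e_{0j} w = w for all j} equals 1 ⊗ V, and on it the elements x_{ij} = e_{ij}e_{0i}e_{0j}^{-1} − h_i act by x_{ij}(1⊗v) = 1 ⊗ (E_{ij} − E_{ii})v for 1 ≤ i ≠ j ≤ n. -/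
open Matrix MvPolynomial

/-- The shift operator `f(d) ↦ f(d + c e_i)` on `Ω = ℂ[d_1,…,d_n]`. -/
noncomputable def shiftOp (n : ℕ) (c : ℂ) (i : Fin n) :
    Module.End ℂ (MvPolynomial (Fin n) ℂ) :=
  (MvPolynomial.aeval fun t => MvPolynomial.X t + if t = i then MvPolynomial.C c else 0).toLinearMap

section
variable (n : ℕ) {V : Type*} [AddCommGroup V] [Module ℂ V]
  (ρ : Matrix (Fin n) (Fin n) ℂ →ₗ[ℂ] Module.End ℂ V)

/-- Action of `e_{0j} = -∂_j ⊗ 1` on `T(Ω,V) = Ω ⊗ V`: the shift `f(d) ↦ f(d + e_j)`. -/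
noncomputable def opE0 (j : Fin n) :
    Module.End ℂ (TensorProduct ℂ (MvPolynomial (Fin n) ℂ) V) :=
  TensorProduct.map (shiftOp n 1 j) LinearMap.id

/-- The inverse `e_{0j}⁻¹`: the shift `f(d) ↦ f(d - e_j)`. -/
noncomputable def opE0inv (j : Fin n) :
    Module.End ℂ (TensorProduct ℂ (MvPolynomial (Fin n) ℂ) V) :=
  TensorProduct.map (shiftOp n (-1) j) LinearMap.id

/-- Action of `e_{ij} = x_i ∂_j ⊗ 1 + 1 ⊗ E_{ij}` on `T(Ω,V)`:
`f(d) ⊗ v ↦ f(d + e_j - e_i) d_i ⊗ v + f(d) ⊗ E_{ij} v`. -/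
noncomputable def opE (i j : Fin n) :
    Module.End ℂ (TensorProduct ℂ (MvPolynomial (Fin n) ℂ) V) :=
  TensorProduct.map (LinearMap.mulLeft ℂ (X i) ∘ₗ shiftOp n 1 j ∘ₗ shiftOp n (-1) i)
      LinearMap.id
    + TensorProduct.map LinearMap.id (ρ (Matrix.single i j 1))

/-- Action of `h_i = x_i ∂_i ⊗ 1 + 1 ⊗ E_{ii}` on `T(Ω,V)`:
`f(d) ⊗ v ↦ d_i f(d) ⊗ v + f(d) ⊗ E_{ii} v`. -/
noncomputable def opH (i : Fin n) :
    Module.End ℂ (TensorProduct ℂ (MvPolynomial (Fin n) ℂ) V) :=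
  TensorProduct.map (LinearMap.mulLeft ℂ (X i)) LinearMap.id
    + TensorProduct.map LinearMap.id (ρ (Matrix.single i i 1))

end

/-!
Each `e_{0j}` acts as `shiftOp n 1 j ⊗ id`. Over a field `- ⊗ V` is exact, so the common fixed
vectors of these maps on `Ω ⊗ V` are `Ωᶠ ⊗ V`, where `Ωᶠ` is the space of polynomials fixed by all
unit shifts. Such a polynomial is constant on the box `ℕⁿ`, hence constant, so `Ωᶠ ⊗ V = 1 ⊗ V`.
On `1 ⊗ V` the shifts act trivially, so `x_{ij}(1 ⊗ v) = e_{ij}(1 ⊗ v) - h_i(1 ⊗ v)`, in which the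
terms `d_i ⊗ v` cancel.
-/

open TensorProduct

namespace MvPolynomial

variable {σ R : Type*} [CommRing R]

def periods (f : MvPolynomial σ R) : AddSubmonoid (σ → R) where
  carrier := {p | ∀ x, eval (x + p) f = eval x f}
  add_mem' {p q} hp hq x := by rw [← add_assoc, hq, hp]
  zero_mem' x := by rw [add_zero]

theorem eq_C_of_eval_add_single_eq [IsDomain R] [CharZero R] [Fintype σ] [DecidableEq σ]
    {f : MvPolynomial σ R} (h : ∀ j x, eval (x + Pi.single j 1) f = eval x f) :
    f = C (eval 0 f) := by
  have single_mem : ∀ j (k : ℕ), Pi.single j (k : R) ∈ periods f := by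
    intro j k
    induction k with
    | zero => simp [(periods f).zero_mem]
    | succ k ih => rw [Nat.cast_succ, Pi.single_add]; exact (periods f).add_mem ih (h j)
  refine funext_set (fun _ ↦ Set.range ((↑) : ℕ → R))
    (fun _ ↦ Set.infinite_range_of_injective Nat.cast_injective) fun x hx ↦ ?_
  choose m hm using fun i ↦ hx i (Set.mem_univ i)
  have : x ∈ periods f := by
    rw [← Finset.univ_sum_single x]
    exact sum_mem fun j _ ↦ hm j ▸ single_mem j (m j)
  simpa using this 0

end MvPolynomial

namespace LinearMap

variable {R K M N V ι : Type*} [CommRing R] [AddCommGroup K] [Module R K] [AddCommGroup M]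
  [Module R M] [AddCommGroup N] [Module R N] [AddCommGroup V] [Module R V] [Module.Flat R V]
  [Fintype ι] [DecidableEq ι]

theorem iInf_ker_rTensor_eq_range_of_exact {h : K →ₗ[R] M} {f : ι → M →ₗ[R] N}
    (hexact : Function.Exact h (pi f)) :
    ⨅ i, ker ((f i).rTensor V) = range (h.rTensor V) := by
  have hpi : (TensorProduct.piLeft R V (fun _ : ι ↦ N)).toLinearMap ∘ₗ (pi f).rTensor V =
      pi fun i ↦ (f i).rTensor V := by
    ext m v i
    simp
  rw [← (LinearMap.exact_iff.mp (Module.Flat.rTensor_exact V hexact)), ← ker_pi, ← hpi,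
    LinearEquiv.ker_comp]

end LinearMap

section Shift

variable {n : ℕ}

theorem eval_shiftOp (x : Fin n → ℂ) (c : ℂ) (i : Fin n) (p : MvPolynomial (Fin n) ℂ) :
    eval x (shiftOp n c i p) = eval (x + Pi.single i c) p := by
  rw [shiftOp, AlgHom.toLinearMap_apply, aeval_eq_bind₁]
  refine (eval₂Hom_bind₁ _ _ _ _).trans (congrArg (eval · p) (funext fun t ↦ ?_))
  by_cases h : t = i <;> simp [h]

theorem shiftOp_comp_shiftOp (c c' : ℂ) (i : Fin n) :
    shiftOp n c i ∘ₗ shiftOp n c' i = shiftOp n (c + c') i := by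
  refine LinearMap.ext fun p ↦ MvPolynomial.funext fun x ↦ ?_
  simp only [LinearMap.comp_apply, eval_shiftOp, add_assoc, Pi.single_add]

theorem shiftOp_zero (i : Fin n) : shiftOp n 0 i = LinearMap.id := by
  refine LinearMap.ext fun p ↦ MvPolynomial.funext fun x ↦ ?_
  simp [eval_shiftOp]

theorem shiftOp_C (c a : ℂ) (i : Fin n) : shiftOp n c i (C a) = C a :=
  (aeval _).commutes a

theorem exact_algebraMap_pi_shiftOp_sub_one :
    Function.Exact (Algebra.linearMap ℂ (MvPolynomial (Fin n) ℂ))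
      (LinearMap.pi fun j ↦ shiftOp n 1 j - 1) := by
  intro p
  simp only [LinearMap.pi_apply, LinearMap.sub_apply, Module.End.one_apply, funext_iff,
    Pi.zero_apply, sub_eq_zero, Set.mem_range, Algebra.linearMap_apply, algebraMap_eq]
  refine ⟨fun h ↦ ⟨_, (eq_C_of_eval_add_single_eq fun j x ↦ ?_).symm⟩, ?_⟩
  · rw [← eval_shiftOp, h j]
  · rintro ⟨a, rfl⟩ j
    exact shiftOp_C 1 a j

end Shift

section Action

variable {n : ℕ} {V : Type*} [AddCommGroup V] [Module ℂ V]

theorem map_shiftOp_mul_map_shiftOp {c c' : ℂ} (hc : c + c' = 0) (j : Fin n) :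
    TensorProduct.map (shiftOp n c j) (LinearMap.id : V →ₗ[ℂ] V) *
      TensorProduct.map (shiftOp n c' j) LinearMap.id = 1 := by
  rw [Module.End.mul_eq_comp, ← map_comp, shiftOp_comp_shiftOp, hc, shiftOp_zero,
    LinearMap.id_comp, TensorProduct.map_id, Module.End.one_eq_id]

theorem opE0_mul_opE0inv (j : Fin n) : opE0 n (V := V) j * opE0inv n j = 1 :=
  map_shiftOp_mul_map_shiftOp (add_neg_cancel 1) j

theorem opE0inv_mul_opE0 (j : Fin n) : opE0inv n (V := V) j * opE0 n j = 1 :=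
  map_shiftOp_mul_map_shiftOp (neg_add_cancel 1) j

theorem eigenspace_opE0_one (j : Fin n) :
    Module.End.eigenspace (opE0 n (V := V) j) 1 =
      LinearMap.ker ((shiftOp n 1 j - 1).rTensor V) := by
  ext w
  rw [Module.End.mem_eigenspace_iff, one_smul, LinearMap.mem_ker, LinearMap.rTensor_sub,
    LinearMap.sub_apply, sub_eq_zero, Module.End.one_eq_id, LinearMap.rTensor_id]
  rfl

theorem rTensor_algebraLinearMap_eq :
    (Algebra.linearMap ℂ (MvPolynomial (Fin n) ℂ)).rTensor V =
      mk ℂ (MvPolynomial (Fin n) ℂ) V 1 ∘ₗ (TensorProduct.lid ℂ V).toLinearMap := by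
  ext v
  simp

theorem iInf_eigenspace_opE0 :
    ⨅ j : Fin n, Module.End.eigenspace (opE0 n (V := V) j) 1 =
      LinearMap.range (mk ℂ (MvPolynomial (Fin n) ℂ) V 1) := by
  rw [iInf_congr eigenspace_opE0_one,
    LinearMap.iInf_ker_rTensor_eq_range_of_exact exact_algebraMap_pi_shiftOp_sub_one,
    rTensor_algebraLinearMap_eq, LinearMap.range_comp_of_range_eq_top _ (LinearEquiv.range _)]

theorem opE0_one_tmul (j : Fin n) (v : V) :
    opE0 n j ((1 : MvPolynomial (Fin n) ℂ) ⊗ₜ[ℂ] v) = 1 ⊗ₜ v := by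
  simp [opE0, shiftOp]

theorem opE0inv_one_tmul (j : Fin n) (v : V) :
    opE0inv n j ((1 : MvPolynomial (Fin n) ℂ) ⊗ₜ[ℂ] v) = 1 ⊗ₜ v := by
  simp [opE0inv, shiftOp]

variable (ρ : Matrix (Fin n) (Fin n) ℂ →ₗ[ℂ] Module.End ℂ V)

theorem opE_one_tmul (i j : Fin n) (v : V) :
    opE n ρ i j ((1 : MvPolynomial (Fin n) ℂ) ⊗ₜ[ℂ] v) =
      X i ⊗ₜ v + 1 ⊗ₜ ρ (Matrix.single i j 1) v := by
  simp [opE, shiftOp]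

theorem opH_one_tmul (i : Fin n) (v : V) :
    opH n ρ i ((1 : MvPolynomial (Fin n) ℂ) ⊗ₜ[ℂ] v) =
      X i ⊗ₜ v + 1 ⊗ₜ ρ (Matrix.single i i 1) v := by
  simp [opH]

end Action

theorem statement18_general (n : ℕ) (V : Type*) [AddCommGroup V] [Module ℂ V]
    (ρ : Matrix (Fin n) (Fin n) ℂ →ₗ[ℂ] Module.End ℂ V) :
    (∀ j : Fin n, opE0 n (V := V) j * opE0inv n (V := V) j = 1 ∧
      opE0inv n (V := V) j * opE0 n (V := V) j = 1) ∧
    (⨅ j : Fin n, Module.End.eigenspace (opE0 n (V := V) j) 1) =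
      LinearMap.range (TensorProduct.mk ℂ (MvPolynomial (Fin n) ℂ) V 1) ∧
    (∀ i j : Fin n, i ≠ j → ∀ v : V,
      (opE n ρ i j * opE0 n (V := V) i * opE0inv n (V := V) j - opH n ρ i)
          ((1 : MvPolynomial (Fin n) ℂ) ⊗ₜ[ℂ] v) =
        (1 : MvPolynomial (Fin n) ℂ) ⊗ₜ[ℂ]
          (ρ (Matrix.single i j 1 - Matrix.single i i 1) v)) := by
  refine ⟨fun j ↦ ⟨opE0_mul_opE0inv j, opE0inv_mul_opE0 j⟩, iInf_eigenspace_opE0, ?_⟩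
  intro i j _ v
  rw [LinearMap.sub_apply, Module.End.mul_apply, Module.End.mul_apply, opE0inv_one_tmul,
    opE0_one_tmul, opE_one_tmul, opH_one_tmul, map_sub, LinearMap.sub_apply, tmul_sub]
  abel

/-- For a `gl_n`-module `V` and the `D_n`-module `Ω = ℂ[d_1,…,d_n]`, in the
`sl_{n+1}`-module `T(Ω,V) = Ω ⊗ V` (via `ψ`): the operators `e_{0j}` are invertible with
inverse the backwards shift, the Whittaker subspace `{w : e_{0j} w = w ∀ j}` equals `1 ⊗ V`,
and `x_{ij} = e_{ij} e_{0i} e_{0j}⁻¹ - h_i` acts on it by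
`x_{ij}(1 ⊗ v) = 1 ⊗ (E_{ij} - E_{ii}) v` for `1 ≤ i ≠ j ≤ n`. -/
theorem statement18 (n : ℕ) (V : Type*) [AddCommGroup V] [Module ℂ V]
    (ρ : Matrix (Fin n) (Fin n) ℂ →ₗ[ℂ] Module.End ℂ V)
    (hρ : ∀ x y : Matrix (Fin n) (Fin n) ℂ, ρ ⁅x, y⁆ = ⁅ρ x, ρ y⁆) :
    (∀ j : Fin n, opE0 n (V := V) j * opE0inv n (V := V) j = 1 ∧
      opE0inv n (V := V) j * opE0 n (V := V) j = 1) ∧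
    (⨅ j : Fin n, Module.End.eigenspace (opE0 n (V := V) j) 1) =
      LinearMap.range (TensorProduct.mk ℂ (MvPolynomial (Fin n) ℂ) V 1) ∧
    (∀ i j : Fin n, i ≠ j → ∀ v : V,
      (opE n ρ i j * opE0 n (V := V) i * opE0inv n (V := V) j - opH n ρ i)
          ((1 : MvPolynomial (Fin n) ℂ) ⊗ₜ[ℂ] v) =
        (1 : MvPolynomial (Fin n) ℂ) ⊗ₜ[ℂ]
          (ρ (Matrix.single i j 1 - Matrix.single i i 1) v)) :=
  statement18_general n V ρ
end
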